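/- arXiv:1305.5798 — 3 statements merged into one kernel-verified Lean document; each statement's English description precedes it below -/
import Mathlib

section
/- Let f be a formal power series over ℂ of the form f(z) = λz + O(z²), where λ is a primitive q-th root of unity. Then the q-th iterate satisfies f^{∘q}(z) = z + a z^{q+1} + O(z^{q+2}) for some a ∈ ℂ; that is, in f^{∘q}(z) − z all coefficients of z, z², …, z^q vanish. -/
/-! The iterate `F = f^{∘q}` commutes with `f`, and its linear coefficient is `λ^q = 1`.
If `F = z + c z^j + O(z^{j+1})` with `2 ≤ j ≤ q`, comparing the coefficients of `z^j` in
`f ∘ F` and `F ∘ f` gives `λ c = λ^j c`; since `λ^{j-1} ≠ 1`, `c = 0`. Induction on `j` then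
shows `z^{q+1} ∣ F - z`. Composition agrees with `PowerSeries.subst`, whose associativity gives
the commutation. -/

open PowerSeries

/-- Composition `f(g(z))` of formal power series, valid when `g` has zero constant term
(then `gᵏ` has order at least `k`, so the defining sum is finite). -/
noncomputable def psComp (f g : PowerSeries ℂ) : PowerSeries ℂ :=
  PowerSeries.mk fun n =>
    ∑ k ∈ Finset.range (n + 1), PowerSeries.coeff k f * PowerSeries.coeff n (g ^ k)

/-- The `k`-th iterate `f ∘ f ∘ ⋯ ∘ f` of a formal power series with zero constant term. -/
noncomputable def psIterate (f : PowerSeries ℂ) (k : ℕ) : PowerSeries ℂ :=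
  (fun g => psComp f g)^[k] PowerSeries.X

theorem mul_pow_dvd_pow_succ_sub_pow_succ {R : Type*} [CommRing R] {a b x y : R}
    (ha : x ∣ a) (hb : x ∣ b) (hab : y ∣ a - b) (k : ℕ) :
    y * x ^ k ∣ a ^ (k + 1) - b ^ (k + 1) := by
  rw [← geom_sum₂_mul, mul_comm y]
  refine mul_dvd_mul (Finset.dvd_sum fun i hi => ?_) hab
  have hik : i ≤ k := Nat.lt_succ_iff.mp (Finset.mem_range.mp hi)
  rw [Nat.add_sub_cancel, ← Nat.add_sub_cancel' hik, pow_add, Nat.add_sub_cancel_left]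
  exact mul_dvd_mul (pow_dvd_pow_of_dvd ha i) (pow_dvd_pow_of_dvd hb (k - i))

namespace PowerSeries

variable {R : Type*} [CommRing R]

theorem X_sq_dvd_sub_C_coeff_one_mul_X {g : R⟦X⟧} (hg : constantCoeff g = 0) :
    X ^ 2 ∣ g - C (coeff 1 g) * X := by
  refine X_pow_dvd_iff.mpr fun m hm => ?_
  interval_cases m <;> simp [hg]

theorem X_pow_add_dvd_pow_succ_sub {g : R⟦X⟧} {a : R} {n : ℕ}
    (hg : X ^ (n + 1) ∣ g - C a * X) (k : ℕ) :
    X ^ (n + 1 + k) ∣ g ^ (k + 1) - (C a * X) ^ (k + 1) := by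
  have hX : X ∣ g := by
    simpa using dvd_add ((dvd_pow_self X n.succ_ne_zero).trans hg) (dvd_mul_left X (C a))
  rw [pow_add]
  exact mul_pow_dvd_pow_succ_sub_pow_succ hX (dvd_mul_left X _) hg k

theorem coeff_pow_succ_of_X_pow_dvd_sub {g : R⟦X⟧} {a : R} {n : ℕ}
    (hg : X ^ (n + 1) ∣ g - C a * X) {k m : ℕ} (hm : m ≤ n + k) :
    coeff m (g ^ (k + 1)) = if m = k + 1 then a ^ (k + 1) else 0 := by
  have := X_pow_dvd_iff.mp (X_pow_add_dvd_pow_succ_sub hg k) m (by omega)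
  rwa [map_sub, sub_eq_zero, mul_pow, ← map_pow, coeff_C_mul_X_pow] at this

end PowerSeries

theorem psComp_eq_subst (f : ℂ⟦X⟧) {g : ℂ⟦X⟧} (hg : constantCoeff g = 0) :
    psComp f g = f.subst g := by
  ext n
  rw [coeff_subst' (HasSubst.of_constantCoeff_zero' hg), psComp, coeff_mk,
    finsum_eq_sum_of_support_subset _ (s := Finset.range (n + 1))]
  · rfl
  intro k hk
  by_contra hkn
  have hnk : n < k := by simpa using hkn
  refine hk ?_
  change coeff k f * coeff n (g ^ k) = 0
  rw [coeff_of_lt_order n ((Nat.cast_lt.mpr hnk).trans_le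
    (le_order_pow_of_constantCoeff_eq_zero k hg)), mul_zero]

theorem psIterate_succ (f : ℂ⟦X⟧) (k : ℕ) :
    psIterate f (k + 1) = psComp f (psIterate f k) :=
  Function.iterate_succ_apply' _ _ _

theorem coeff_one_psComp (f g : ℂ⟦X⟧) : coeff 1 (psComp f g) = coeff 1 f * coeff 1 g := by
  simp [psComp, Finset.sum_range_succ]

theorem constantCoeff_psComp (f g : ℂ⟦X⟧) : constantCoeff (psComp f g) = constantCoeff f := by
  rw [← coeff_zero_eq_constantCoeff_apply, ← coeff_zero_eq_constantCoeff_apply]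
  simp [psComp]

theorem constantCoeff_psIterate {f : ℂ⟦X⟧} (hf : constantCoeff f = 0) (k : ℕ) :
    constantCoeff (psIterate f k) = 0 := by
  cases k with
  | zero => simp [psIterate]
  | succ k => rw [psIterate_succ, constantCoeff_psComp, hf]

theorem coeff_one_psIterate (f : ℂ⟦X⟧) (k : ℕ) :
    coeff 1 (psIterate f k) = coeff 1 f ^ k := by
  induction k with
  | zero => simp [psIterate]
  | succ k ih => rw [psIterate_succ, coeff_one_psComp, ih, pow_succ']

theorem psComp_psIterate_comm {f : ℂ⟦X⟧} (hf : constantCoeff f = 0) (k : ℕ) :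
    psComp f (psIterate f k) = psComp (psIterate f k) f := by
  have hsubst := HasSubst.of_constantCoeff_zero' hf
  induction k with
  | zero => simp [psIterate, psComp_eq_subst f constantCoeff_X, psComp_eq_subst X hf,
      subst_X hsubst]
  | succ k ih =>
    have hF0 := constantCoeff_psIterate hf k
    set F := psIterate f k
    have hF := HasSubst.of_constantCoeff_zero' hF0
    have hfF : constantCoeff (psComp f F) = 0 := by rw [constantCoeff_psComp, hf]
    rw [psIterate_succ]
    calc psComp f (psComp f F) = f.subst (psComp F f) := by
          rw [← ih, psComp_eq_subst f hfF]
      _ = psComp (psComp f F) f := by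
          rw [psComp_eq_subst F hf, psComp_eq_subst _ hf, psComp_eq_subst f hF0,
            subst_comp_subst_apply hF hsubst]

theorem coeff_psComp_of_X_sq_dvd (f : ℂ⟦X⟧) {g : ℂ⟦X⟧} {a : ℂ} (hg : X ^ 2 ∣ g - C a * X)
    {j : ℕ} (hj : 2 ≤ j) :
    coeff j (psComp f g) = coeff 1 f * coeff j g
      + ∑ k ∈ Finset.Ico 2 j, coeff k f * coeff j (g ^ k) + coeff j f * a ^ j := by
  obtain ⟨i, rfl⟩ := Nat.exists_eq_add_of_le' hj
  have hgj : coeff (i + 2) (g ^ (i + 2)) = a ^ (i + 2) := by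
    rw [coeff_pow_succ_of_X_pow_dvd_sub (n := 1) (k := i + 1) hg (by omega), if_pos rfl]
  rw [psComp, coeff_mk, Finset.sum_range_succ, ← Finset.sum_range_add_sum_Ico _ hj, hgj]
  simp [Finset.sum_range_succ, coeff_one]

theorem X_pow_succ_dvd_sub_X_of_psComp_comm {f F : ℂ⟦X⟧} (hf : constantCoeff f = 0)
    (hcomm : psComp f F = psComp F f) {j : ℕ} (hj : 2 ≤ j) (hF : X ^ j ∣ F - X)
    (hl : coeff 1 f ^ j ≠ coeff 1 f) :
    X ^ (j + 1) ∣ F - X := by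
  have hFX : X ^ j ∣ F - C 1 * X := by simpa using hF
  have hF1 : coeff 1 F = 1 := by
    simpa [sub_eq_zero] using X_pow_dvd_iff.mp hF 1 (by omega)
  have hFk : ∀ k ∈ Finset.Ico 2 j, coeff k F * coeff j (f ^ k) = 0 := fun k hk => by
    have hk := Finset.mem_Ico.mp hk
    have := X_pow_dvd_iff.mp hF k hk.2
    rw [map_sub, coeff_X, if_neg (by omega), sub_zero] at this
    rw [this, zero_mul]
  have hFpow : ∀ k ∈ Finset.Ico 2 j, coeff k f * coeff j (F ^ k) = 0 := fun k hk => by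
    have hk := Finset.mem_Ico.mp hk
    obtain ⟨n, rfl⟩ := Nat.exists_eq_add_of_le' (by omega : 1 ≤ j)
    obtain ⟨m, rfl⟩ := Nat.exists_eq_add_of_le' (by omega : 1 ≤ k)
    rw [coeff_pow_succ_of_X_pow_dvd_sub hFX (by omega), if_neg (by omega), mul_zero]
  have key := congrArg (coeff j) hcomm
  rw [coeff_psComp_of_X_sq_dvd f ((pow_dvd_pow X hj).trans hFX) hj,
    coeff_psComp_of_X_sq_dvd F (X_sq_dvd_sub_C_coeff_one_mul_X hf) hj,
    Finset.sum_eq_zero hFk, Finset.sum_eq_zero hFpow, hF1, one_pow] at key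
  have hFj : coeff j F = 0 := by
    have : (coeff 1 f - coeff 1 f ^ j) * coeff j F = 0 := by linear_combination key
    exact (mul_eq_zero.mp this).resolve_left (sub_ne_zero.mpr hl.symm)
  refine X_pow_dvd_iff.mpr fun m hm => ?_
  rcases (Nat.lt_succ_iff.mp hm).lt_or_eq with hm | rfl
  · exact X_pow_dvd_iff.mp hF m hm
  · rw [map_sub, hFj, coeff_X, if_neg (by omega), sub_zero]

theorem X_pow_succ_dvd_psIterate_sub_X {f : ℂ⟦X⟧} (hf : constantCoeff f = 0) {q : ℕ}
    (hroot : coeff 1 f ^ q = 1) (hprim : ∀ j, 0 < j → j < q → coeff 1 f ^ j ≠ 1) :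
    X ^ (q + 1) ∣ psIterate f q - X := by
  rcases q.eq_zero_or_pos with rfl | hq
  · simp [psIterate]
  have hl0 : coeff 1 f ≠ 0 := fun h => by simp [h, hq.ne'] at hroot
  have hF : ∀ j, 2 ≤ j → j ≤ q + 1 → X ^ j ∣ psIterate f q - X := by
    intro j hj
    induction j, hj using Nat.le_induction with
    | base =>
      intro _
      simpa [coeff_one_psIterate, hroot] using
        X_sq_dvd_sub_C_coeff_one_mul_X (constantCoeff_psIterate hf q)
    | succ j hj ih =>
      intro hjq
      refine X_pow_succ_dvd_sub_X_of_psComp_comm hf (psComp_psIterate_comm hf q) hj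
        (ih (by omega)) fun hlj => hprim (j - 1) (by omega) (by omega) ?_
      apply mul_right_cancel₀ hl0
      rw [← pow_succ, Nat.sub_add_cancel (by omega), hlj, one_mul]
  exact hF (q + 1) (by omega) le_rfl

theorem iterate_parabolic_normal_form_general (f : PowerSeries ℂ) (l : ℂ) (q : ℕ)
    (h0 : PowerSeries.constantCoeff f = 0) (h1 : PowerSeries.coeff 1 f = l)
    (hroot : l ^ q = 1) (hprim : ∀ j : ℕ, 0 < j → j < q → l ^ j ≠ 1) :
    ∃ a : ℂ,
      (∀ j : ℕ, 1 ≤ j → j ≤ q →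
        PowerSeries.coeff j (psIterate f q - PowerSeries.X) = 0) ∧
      PowerSeries.coeff (q + 1) (psIterate f q - PowerSeries.X) = a := by
  subst h1
  have hdvd := X_pow_succ_dvd_psIterate_sub_X h0 hroot hprim
  exact ⟨_, fun j _ hjq => X_pow_dvd_iff.mp hdvd j (Nat.lt_succ_of_le hjq), rfl⟩

/-- If `f(z) = λz + O(z²)` is a formal power series with `λ` a primitive `q`-th
root of unity, then `f^{∘q}(z) = z + a z^{q+1} + O(z^{q+2})`: in `f^{∘q}(z) − z` all the
coefficients of `z, z², …, z^q` vanish. -/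
theorem iterate_parabolic_normal_form (f : PowerSeries ℂ) (l : ℂ) (q : ℕ) (hq : 0 < q)
    (h0 : PowerSeries.constantCoeff f = 0) (h1 : PowerSeries.coeff 1 f = l)
    (hroot : l ^ q = 1) (hprim : ∀ j : ℕ, 0 < j → j < q → l ^ j ≠ 1) :
    ∃ a : ℂ,
      (∀ j : ℕ, 1 ≤ j → j ≤ q →
        PowerSeries.coeff j (psIterate f q - PowerSeries.X) = 0) ∧
      PowerSeries.coeff (q + 1) (psIterate f q - PowerSeries.X) = a :=
  iterate_parabolic_normal_form_general f l q h0 h1 hroot hprim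
end

section
/- Let ∼ be an equivalence relation on the unit circle S¹ ⊂ ℂ whose graph is a closed subset of S¹ × S¹, and which is 'unlinked': whenever t₁ ∼ t₂, t₃ ∼ t₄ and t₂ ≁ t₃, the open straight segments (t₁, t₂) and (t₃, t₄) in ℂ are disjoint. Then for every equivalence class A of ∼ and every connected component C of S¹ ∖ A, the set of points of C that are ∼-equivalent to some point of A is empty; equivalently, each class A has the property that the convex hulls of distinct classes are pairwise disjoint. -/
/-!
By Carathéodory, a common point of the two hulls lies in the hulls of affinely independent
sets `t ⊆ A` and `u ⊆ B`: points, segments or triangles with vertices on the circle. A point of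
the circle lying in the hull of other points of the circle is one of them, so no vertex of `u`
lies in the hull of `t` and vice versa. Since the hull of `u` is connected and meets the hull of
`t` without being contained in it, it meets the boundary of the hull of `t`, that is, some edge
`[a₁, a₂]`. By the same argument the edge `[a₁, a₂]` meets some edge `[b₁, b₂]` of the hull of
`u`. Decomposing each closed chord into its open chord and its endpoints (degenerate open
chords), unlinkedness forbids this.
-/

open Set Metric Module

theorem IsPreconnected.inter_frontier_nonempty {X : Type*} [TopologicalSpace X] {s t : Set X}
    (hs : IsPreconnected s) (hst : (s ∩ t).Nonempty) (hst' : (s \ t).Nonempty) :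
    (s ∩ frontier t).Nonempty := by
  by_contra h
  have hcover : s ⊆ interior t ∪ (closure t)ᶜ := fun z hz => by
    by_contra hz'
    simp only [mem_union, mem_compl_iff, not_or, not_not] at hz'
    exact h ⟨z, hz, hz'.2, hz'.1⟩
  obtain ⟨p, hps, hpt⟩ := hst
  obtain ⟨q, hqs, hqt⟩ := hst'
  obtain ⟨z, -, hzi, hzc⟩ := hs _ _ isOpen_interior isClosed_closure.isOpen_compl hcover
    ⟨p, hps, (hcover hps).resolve_right (not_not.2 (subset_closure hpt))⟩
    ⟨q, hqs, (hcover hqs).resolve_left fun hq => hqt (interior_subset hq)⟩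
  exact hzc (interior_subset_closure hzi)

section OrderedField

variable {𝕜 E : Type*} [Field 𝕜] [LinearOrder 𝕜] [IsStrictOrderedRing 𝕜] [AddCommGroup E]
  [Module 𝕜 E]

theorem AffineBasis.mem_convexHull_image_compl_of_coord_eq_zero {ι : Type*} [Fintype ι]
    (b : AffineBasis ι 𝕜 E) {z : E} (hz : z ∈ convexHull 𝕜 (range b)) {i : ι}
    (hi : b.coord i z = 0) : z ∈ convexHull 𝕜 (b '' {i}ᶜ) := by
  classical
  rw [b.convexHull_eq_nonneg_coord] at hz
  have hsum : ∑ j ∈ Finset.univ.erase i, b.coord j z = 1 := by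
    rw [Finset.sum_erase _ (f := fun j => b.coord j z) hi, b.sum_coord_apply_eq_one]
  rw [← b.linear_combination_coord_eq_self z, ← Finset.sum_erase _ (by rw [hi, zero_smul])]
  exact (convex_convexHull 𝕜 _).sum_mem (fun j _ => hz j) hsum fun j hj =>
    subset_convexHull 𝕜 _ (mem_image_of_mem b (Finset.ne_of_mem_erase hj))

theorem Finset.exists_mem_segment_of_mem_convexHull_of_card_le_two {s : Finset E}
    (hs : s.card ≤ 2) {z : E} (hz : z ∈ convexHull 𝕜 (s : Set E)) :
    ∃ a ∈ s, ∃ b ∈ s, z ∈ segment 𝕜 a b := by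
  classical
  interval_cases hc : s.card
  · simp_all
  · obtain ⟨a, rfl⟩ := Finset.card_eq_one.1 hc
    simp_all
  · obtain ⟨a, b, -, rfl⟩ := Finset.card_eq_two.1 hc
    rw [Finset.coe_pair, convexHull_pair] at hz
    exact ⟨a, by simp, b, by simp, hz⟩

theorem segment_subset_union_openSegment (x y : E) :
    segment 𝕜 x y ⊆ openSegment 𝕜 x x ∪ openSegment 𝕜 y y ∪ openSegment 𝕜 x y := by
  rw [openSegment_same, openSegment_same, ← insert_endpoints_openSegment, insert_eq, insert_eq,
    union_assoc]

theorem forall_disjoint_segment_of_forall_disjoint_openSegment {A B : Set E}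
    (h : ∀ a₁ ∈ A, ∀ a₂ ∈ A, ∀ b₁ ∈ B, ∀ b₂ ∈ B,
      Disjoint (openSegment 𝕜 a₁ a₂) (openSegment 𝕜 b₁ b₂)) :
    ∀ a₁ ∈ A, ∀ a₂ ∈ A, ∀ b₁ ∈ B, ∀ b₂ ∈ B, Disjoint (segment 𝕜 a₁ a₂) (segment 𝕜 b₁ b₂) := by
  intro a₁ ha₁ a₂ ha₂ b₁ hb₁ b₂ hb₂
  refine Disjoint.mono (segment_subset_union_openSegment a₁ a₂)
    (segment_subset_union_openSegment b₁ b₂) ?_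
  simp only [disjoint_union_left, disjoint_union_right]
  and_intros <;> apply h <;> assumption

end OrderedField

section Normed

variable {E : Type*} [NormedAddCommGroup E] [NormedSpace ℝ E]

theorem mem_of_mem_convexHull_of_mem_sphere [StrictConvexSpace ℝ E] {c : E} {r : ℝ} (hr : r ≠ 0)
    {s : Set E} (hs : s ⊆ sphere c r) {x : E} (hx : x ∈ convexHull ℝ s)
    (hxs : x ∈ sphere c r) : x ∈ s :=
  have hsub : convexHull ℝ s ⊆ closedBall c r :=
    convexHull_min (hs.trans sphere_subset_closedBall) (convex_closedBall c r)
  extremePoints_convexHull_subset <| inter_extremePoints_subset_extremePoints_of_subset hsub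
    ⟨hx, StrictConvexSpace.sphere_subset_extremePoints_closedBall c hr hxs⟩

variable [FiniteDimensional ℝ E]

theorem exists_mem_segment_of_mem_frontier_convexHull (hE : finrank ℝ E = 2) {t : Finset E}
    (ht : AffineIndependent ℝ ((↑) : t → E)) {z : E}
    (hz : z ∈ frontier (convexHull ℝ (t : Set E))) : ∃ a ∈ t, ∃ b ∈ t, z ∈ segment ℝ a b := by
  classical
  have hzt : z ∈ convexHull ℝ (t : Set E) :=
    (t.finite_toSet.isClosed_convexHull ℝ).frontier_subset hz
  have hcard : t.card ≤ 3 := by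
    have := ht.card_le_finrank_succ
    have := Submodule.finrank_le (vectorSpan ℝ (range ((↑) : t → E)))
    simp only [Fintype.card_coe] at *
    omega
  by_cases hspan : affineSpan ℝ (range ((↑) : t → E)) = ⊤
  · let b : AffineBasis t ℝ E := ⟨(↑), ht, hspan⟩
    have hrange : range b = t := Subtype.range_coe
    obtain ⟨i, hi⟩ : ∃ i, b.coord i z = 0 := by
      by_contra! hne
      refine hz.2 ?_
      rw [← hrange, b.interior_convexHull]
      rw [← hrange, b.convexHull_eq_nonneg_coord] at hzt
      exact fun j => (hzt j).lt_of_ne' (hne j)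
    have hface : b '' {i}ᶜ = (t.erase i : Set E) := by
      ext x
      constructor
      · rintro ⟨j, hj, rfl⟩
        exact Finset.mem_erase.2 ⟨fun h => hj (Subtype.ext h), j.2⟩
      · intro hx
        obtain ⟨hxi, hxt⟩ := Finset.mem_erase.1 hx
        exact ⟨⟨x, hxt⟩, fun h => hxi (congrArg Subtype.val h), rfl⟩
    have hzface := b.mem_convexHull_image_compl_of_coord_eq_zero (hrange ▸ hzt) hi
    obtain ⟨a, ha, c, hc, hzac⟩ := Finset.exists_mem_segment_of_mem_convexHull_of_card_le_two
      (s := t.erase i) (by rw [Finset.card_erase_of_mem i.2]; omega) (hface ▸ hzface)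
    exact ⟨a, Finset.mem_of_mem_erase ha, c, Finset.mem_of_mem_erase hc, hzac⟩
  · have : t.card ≠ 3 := by
      rw [ht.affineSpan_eq_top_iff_card_eq_finrank_add_one, hE] at hspan
      simpa using hspan
    exact Finset.exists_mem_segment_of_mem_convexHull_of_card_le_two (by omega) hzt

theorem IsPreconnected.exists_inter_segment_nonempty (hE : finrank ℝ E = 2) {t : Finset E}
    (ht : AffineIndependent ℝ ((↑) : t → E)) {M : Set E} (hM : IsPreconnected M)
    (hMt : (M ∩ convexHull ℝ t).Nonempty) (hMt' : (M \ convexHull ℝ t).Nonempty) :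
    ∃ a ∈ t, ∃ b ∈ t, (M ∩ segment ℝ a b).Nonempty :=
  let ⟨z, hzM, hz⟩ := hM.inter_frontier_nonempty hMt hMt'
  let ⟨a, ha, b, hb, hzab⟩ := exists_mem_segment_of_mem_frontier_convexHull hE ht hz
  ⟨a, ha, b, hb, z, hzM, hzab⟩

theorem disjoint_convexHull_of_forall_disjoint_segment [StrictConvexSpace ℝ E]
    (hE : finrank ℝ E = 2) {c : E} {r : ℝ} (hr : r ≠ 0) {A B : Set E} (hA : A ⊆ sphere c r)
    (hB : B ⊆ sphere c r)
    (hAB : ∀ a₁ ∈ A, ∀ a₂ ∈ A, ∀ b₁ ∈ B, ∀ b₂ ∈ B,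
      Disjoint (segment ℝ a₁ a₂) (segment ℝ b₁ b₂)) :
    Disjoint (convexHull ℝ A) (convexHull ℝ B) := by
  have hne : ∀ a ∈ A, ∀ b ∈ B, a ≠ b := fun a ha b hb hab => by
    simpa [segment_same, hab] using hAB a ha a ha b hb b hb
  have hB_notMem : ∀ b ∈ B, ∀ s ⊆ A, b ∉ convexHull ℝ s := fun b hb s hs hbs =>
    hne b (hs (mem_of_mem_convexHull_of_mem_sphere hr (hs.trans hA) hbs (hB hb))) b hb rfl
  have hA_notMem : ∀ a ∈ A, ∀ s ⊆ B, a ∉ convexHull ℝ s := fun a ha s hs has =>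
    hne a ha a (hs (mem_of_mem_convexHull_of_mem_sphere hr (hs.trans hB) has (hA ha))) rfl
  rw [Set.disjoint_left]
  intro p hpA hpB
  rw [convexHull_eq_union] at hpA hpB
  simp only [mem_iUnion, exists_prop] at hpA hpB
  obtain ⟨t, htA, ht, hpt⟩ := hpA
  obtain ⟨u, huB, hu, hpu⟩ := hpB
  obtain ⟨b₀, hb₀⟩ : (u : Set E).Nonempty := by
    by_contra h
    simp_all
  obtain ⟨a₁, ha₁, a₂, ha₂, q, hqu, hqa⟩ :=
    (convex_convexHull ℝ _).isPreconnected.exists_inter_segment_nonempty hE ht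
      ⟨p, hpu, hpt⟩ ⟨b₀, subset_convexHull ℝ _ hb₀, hB_notMem b₀ (huB hb₀) t htA⟩
  obtain ⟨b₁, hb₁, b₂, hb₂, q', hqa', hqb'⟩ :=
    (convex_segment a₁ a₂).isPreconnected.exists_inter_segment_nonempty hE hu
      ⟨q, hqa, hqu⟩ ⟨a₁, left_mem_segment ℝ a₁ a₂, hA_notMem a₁ (htA ha₁) u huB⟩
  exact (hAB a₁ (htA ha₁) a₂ (htA ha₂) b₁ (huB hb₁) b₂ (huB hb₂)).ne_of_mem hqa' hqb' rfl

end Normed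

theorem lamination_classes_convex_hulls_disjoint_general
    (S : Set ℂ) (hS : S = Metric.sphere (0 : ℂ) 1)
    (r : ℂ → ℂ → Prop) (hequiv : Equivalence r)
    (hunlinked : ∀ t₁ ∈ S, ∀ t₂ ∈ S, ∀ t₃ ∈ S, ∀ t₄ ∈ S,
      r t₁ t₂ → r t₃ t₄ → ¬ r t₂ t₃ →
      Disjoint (openSegment ℝ t₁ t₂) (openSegment ℝ t₃ t₄)) :
    ∀ x ∈ S, ∀ y ∈ S, ¬ r x y →
      Disjoint (convexHull ℝ {z ∈ S | r z x}) (convexHull ℝ {z ∈ S | r z y}) := by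
  intro x _ y _ hxy
  have hsphere : ∀ w, {z ∈ S | r z w} ⊆ sphere 0 1 := fun w z hz => hS ▸ hz.1
  refine disjoint_convexHull_of_forall_disjoint_segment Complex.finrank_real_complex one_ne_zero
    (hsphere x) (hsphere y) (forall_disjoint_segment_of_forall_disjoint_openSegment ?_)
  rintro c ⟨hcS, hcx⟩ d ⟨hdS, hdx⟩ e ⟨heS, hey⟩ f ⟨hfS, hfy⟩
  exact hunlinked c hcS d hdS e heS f hfS (hequiv.trans hcx (hequiv.symm hdx))
    (hequiv.trans hey (hequiv.symm hfy))
    fun hde => hxy (hequiv.trans (hequiv.symm hdx) (hequiv.trans hde hey))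

/-- Let `∼` be an equivalence relation on the unit circle `S¹ ⊂ ℂ` whose graph
is closed in `S¹ × S¹` and which is unlinked: if `t₁ ∼ t₂`, `t₃ ∼ t₄` and `t₂ ≁ t₃`, then the
open straight segments `(t₁, t₂)` and `(t₃, t₄)` are disjoint. Then the convex hulls of
distinct equivalence classes are pairwise disjoint. -/
theorem lamination_classes_convex_hulls_disjoint
    (S : Set ℂ) (hS : S = Metric.sphere (0 : ℂ) 1)
    (r : ℂ → ℂ → Prop) (hequiv : Equivalence r)
    (hclosed : IsClosed {p : ℂ × ℂ | p.1 ∈ S ∧ p.2 ∈ S ∧ r p.1 p.2})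
    (hunlinked : ∀ t₁ ∈ S, ∀ t₂ ∈ S, ∀ t₃ ∈ S, ∀ t₄ ∈ S,
      r t₁ t₂ → r t₃ t₄ → ¬ r t₂ t₃ →
      Disjoint (openSegment ℝ t₁ t₂) (openSegment ℝ t₃ t₄)) :
    ∀ x ∈ S, ∀ y ∈ S, ¬ r x y →
      Disjoint (convexHull ℝ {z ∈ S | r z x}) (convexHull ℝ {z ∈ S | r z y}) :=
  lamination_classes_convex_hulls_disjoint_general S hS r hequiv hunlinked
end

section
/- Let f(z) = λz + b z² + z³ and suppose for a sequence bₙ → b' in ℂ there are points zₙ ≠ 0 with f_{λ,bₙ}^{∘N}(zₙ) = zₙ (fixed points of the N-th iterate) and zₙ → 0. Writing f_{λ,bₙ}^{∘N}(z) − z = z·(z − zₙ)·Q_{bₙ}(z) with Q_{bₙ} a polynomial whose coefficients depend continuously on bₙ, one concludes f_{λ,b'}^{∘N}(z) − z = z²·Q_{b'}(z); in particular 0 is a root of f_{λ,b'}^{∘N}(z) − z of multiplicity at least 2, i.e., (f_{λ,b'}^{∘N})'(0) = 1. -/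
open Filter Topology

/-!
Passing to the limit `n → ∞` in the factorization `f_{bₙ}^{∘N}(w) − w = w (w − zₙ) Q_{bₙ}(w)`:
the iterates depend continuously on the parameter, `zₙ → 0` and `Q_{bₙ}(w) → Q_{b'}(w)`, so
`f_{b'}^{∘N}(w) = w + w² Q_{b'}(w)`, whose derivative at `0` is `1`.
-/

theorem Filter.Tendsto.iterate_apply_of_continuous_uncurry {ι α β : Type*} [TopologicalSpace α]
    [TopologicalSpace β] {f : α → β → β} (hf : Continuous (Function.uncurry f)) {l : Filter ι}
    {p : ι → α} {a : α} (hp : Tendsto p l (𝓝 a)) (k : ℕ) (x : β) :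
    Tendsto (fun i => (f (p i))^[k] x) l (𝓝 ((f a)^[k] x)) := by
  induction k with
  | zero => exact tendsto_const_nhds
  | succ k ih =>
    simp only [Function.iterate_succ_apply']
    exact (hf.tendsto (a, (f a)^[k] x)).comp (hp.prodMk_nhds ih)

theorem hasDerivAt_mul_of_continuousAt {𝕜 : Type*} [NontriviallyNormedField 𝕜] {g : 𝕜 → 𝕜}
    (hg : ContinuousAt g 0) : HasDerivAt (fun w => w * g w) (g 0) 0 := by
  rw [hasDerivAt_iff_tendsto_slope]
  refine (hg.tendsto.mono_left nhdsWithin_le_nhds).congr' ?_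
  filter_upwards [self_mem_nhdsWithin] with w (hw : w ≠ 0)
  rw [slope_def_field, sub_zero, zero_mul, sub_zero, mul_div_cancel_left₀ _ hw]

theorem deriv_id_add_sq_mul_of_continuousAt {𝕜 : Type*} [NontriviallyNormedField 𝕜]
    {q : 𝕜 → 𝕜} (hq : ContinuousAt q 0) : deriv (fun w => w + w ^ 2 * q w) 0 = 1 := by
  have hfactor : (fun w => w + w ^ 2 * q w) = fun w => w * (1 + w * q w) :=
    funext fun w => by ring
  rw [hfactor, (hasDerivAt_mul_of_continuousAt (by fun_prop)).deriv, zero_mul, add_zero]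

theorem parabolic_limit_of_merging_periodic_points_general (l b' : ℂ) (bseq : ℕ → ℂ)
    (hb : Tendsto bseq atTop (nhds b')) (N : ℕ) (z : ℕ → ℂ)
    (hzlim : Tendsto z atTop (nhds 0))
    (Q : ℂ → ℂ → ℂ) (hQcont : ∀ b : ℂ, Continuous (Q b))
    (hQb : ∀ w : ℂ, Tendsto (fun n => Q (bseq n) w) atTop (nhds (Q b' w)))
    (hfact : ∀ n, ∀ w : ℂ,
      (fun w : ℂ => l * w + bseq n * w ^ 2 + w ^ 3)^[N] w - w =
        w * (w - z n) * Q (bseq n) w) :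
    (∀ w : ℂ,
      (fun w : ℂ => l * w + b' * w ^ 2 + w ^ 3)^[N] w - w = w ^ 2 * Q b' w) ∧
    deriv ((fun w : ℂ => l * w + b' * w ^ 2 + w ^ 3)^[N]) 0 = 1 := by
  have hlimit : ∀ w : ℂ,
      (fun w : ℂ => l * w + b' * w ^ 2 + w ^ 3)^[N] w - w = w ^ 2 * Q b' w := by
    intro w
    have hf : Continuous (Function.uncurry fun (b w : ℂ) => l * w + b * w ^ 2 + w ^ 3) := by
      fun_prop
    have hlhs := (hb.iterate_apply_of_continuous_uncurry hf N w).sub_const w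
    have hrhs := ((tendsto_const_nhds (x := w)).sub hzlim |>.const_mul w).mul (hQb w)
    simp only [← hfact] at hrhs
    rw [tendsto_nhds_unique hlhs hrhs]
    ring
  refine ⟨hlimit, ?_⟩
  have hiter : (fun w : ℂ => l * w + b' * w ^ 2 + w ^ 3)^[N] = fun w => w + w ^ 2 * Q b' w :=
    funext fun w => by linear_combination hlimit w
  rw [hiter]
  exact deriv_id_add_sq_mul_of_continuousAt (hQcont b').continuousAt

/-- Suppose `bₙ → b'`, and `zₙ ≠ 0` are fixed points of the `N`-th iterate of
`f_{λ,bₙ}(z) = λz + bz² + z³` with `zₙ → 0`, with factorizations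
`f_{λ,bₙ}^{∘N}(z) − z = z (z − zₙ) Q_{bₙ}(z)` where the (polynomial) functions `Q_b` depend
continuously on `b`. Then `f_{λ,b'}^{∘N}(z) − z = z² Q_{b'}(z)`; in particular `0` is a root
of multiplicity at least `2`, i.e. `(f_{λ,b'}^{∘N})'(0) = 1`. -/
theorem parabolic_limit_of_merging_periodic_points (l b' : ℂ) (bseq : ℕ → ℂ)
    (hb : Tendsto bseq atTop (nhds b')) (N : ℕ) (hN : 0 < N) (z : ℕ → ℂ)
    (hz0 : ∀ n, z n ≠ 0)
    (hzfix : ∀ n, (fun w : ℂ => l * w + bseq n * w ^ 2 + w ^ 3)^[N] (z n) = z n)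
    (hzlim : Tendsto z atTop (nhds 0))
    (Q : ℂ → ℂ → ℂ) (hQcont : ∀ b : ℂ, Continuous (Q b))
    (hQb : ∀ w : ℂ, Tendsto (fun n => Q (bseq n) w) atTop (nhds (Q b' w)))
    (hfact : ∀ n, ∀ w : ℂ,
      (fun w : ℂ => l * w + bseq n * w ^ 2 + w ^ 3)^[N] w - w =
        w * (w - z n) * Q (bseq n) w) :
    (∀ w : ℂ,
      (fun w : ℂ => l * w + b' * w ^ 2 + w ^ 3)^[N] w - w = w ^ 2 * Q b' w) ∧
    deriv ((fun w : ℂ => l * w + b' * w ^ 2 + w ^ 3)^[N]) 0 = 1 :=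
  parabolic_limit_of_merging_periodic_points_general l b' bseq hb N z hzlim Q hQcont hQb hfact
end
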